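/- arXiv:2308.00979 — 5 statements merged into one kernel-verified Lean document; each statement's English description precedes it below -/
import Mathlib

section
/- Every unit disk in the plane is contained in a grid cell of at least one of the four shifted grids G₁, G₂, G₃, G₄, where G₁ has lines {x=4i}, {y=4i}; G₂ has lines {x=4i+2}, {y=4i}; G₃ has lines {x=4i}, {y=4i+2}; G₄ has lines {x=4i+2}, {y=4i+2}, for all i ∈ ℤ. -/
/-!
The four grids together have a vertical line at every `x = 2t`, `t ∈ ℤ`, and the parity of `t`
selects the grid. A unit disk has horizontal extent `[c₀ - 1, c₀ + 1]`, an interval of length 2,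
so choosing `2t` as the largest even integer `≤ c₀ - 1` gives `c₀ + 1 < 2t + 4`: the extent lies
between the lines `2t` and `2t + 4` of one grid. Choose the horizontal lines independently.
-/

open Metric Set

lemma exists_int_two_mul_le_sub_one (x : ℝ) : ∃ t : ℤ, 2 * (t : ℝ) ≤ x - 1 ∧ x + 1 ≤ 2 * t + 4 := by
  refine ⟨⌊(x - 1) / 2⌋, ?_, ?_⟩
  · linarith [Int.floor_le ((x - 1) / 2)]
  · linarith [Int.lt_floor_add_one ((x - 1) / 2)]

lemma exists_shifted_cell_Icc_subset (x : ℝ) :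
    ∃ o : ℝ, (o = 0 ∨ o = 2) ∧ ∃ i : ℤ, Icc (x - 1) (x + 1) ⊆ Icc (4 * i + o) (4 * i + o + 4) := by
  obtain ⟨t, hlow, hupp⟩ := exists_int_two_mul_le_sub_one x
  rcases Int.even_or_odd' t with ⟨i, rfl | rfl⟩
  · refine ⟨0, .inl rfl, i, Icc_subset_Icc ?_ ?_⟩ <;> push_cast at hlow hupp ⊢ <;> linarith
  · refine ⟨2, .inr rfl, i, Icc_subset_Icc ?_ ?_⟩ <;> push_cast at hlow hupp ⊢ <;> linarith

lemma PiLp.apply_mem_Icc_of_mem_closedBall {p : ENNReal} [Fact (1 ≤ p)] {ι : Type*} [Fintype ι]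
    {x c : PiLp p fun _ : ι => ℝ} {r : ℝ} (hx : x ∈ closedBall c r) (i : ι) :
    x i ∈ Icc (c i - r) (c i + r) := by
  rw [← Real.closedBall_eq_Icc]
  exact (PiLp.dist_apply_le x c i).trans hx

/-- Every unit disk in the plane is contained in a grid cell of at least one of the
four shifted grids with cell side length 4, where the vertical lines are at `x = 4i` or
`x = 4i+2` and the horizontal lines at `y = 4j` or `y = 4j+2`. -/
theorem unit_disk_in_shifted_grid_cell (c : EuclideanSpace ℝ (Fin 2)) :
    ∃ ox oy : ℝ, (ox = 0 ∨ ox = 2) ∧ (oy = 0 ∨ oy = 2) ∧ ∃ i j : ℤ,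
      Metric.closedBall c 1 ⊆
        {p : EuclideanSpace ℝ (Fin 2) |
          4 * (i : ℝ) + ox ≤ p 0 ∧ p 0 ≤ 4 * (i : ℝ) + ox + 4 ∧
          4 * (j : ℝ) + oy ≤ p 1 ∧ p 1 ≤ 4 * (j : ℝ) + oy + 4} := by
  obtain ⟨ox, hox, i, hi⟩ := exists_shifted_cell_Icc_subset (c 0)
  obtain ⟨oy, hoy, j, hj⟩ := exists_shifted_cell_Icc_subset (c 1)
  refine ⟨ox, oy, hox, hoy, i, j, fun p hp => ?_⟩
  obtain ⟨hx₁, hx₂⟩ := hi (PiLp.apply_mem_Icc_of_mem_closedBall hp 0)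
  obtain ⟨hy₁, hy₂⟩ := hj (PiLp.apply_mem_Icc_of_mem_closedBall hp 1)
  exact ⟨hx₁, hx₂, hy₁, hy₂⟩
end

section
/- For any finite set S of pairwise disjoint unit disks in the plane, at least one of the four shifted grids G₁, …, G₄ has the property that the union of its cells contains at least |S|/4 disks from S (each disk entirely within a single cell). -/
lemma line_off (x : ℝ) : ∃ o : ℝ, (o = 0 ∨ o = 2) ∧
    ∃ i : ℤ, 4 * (i : ℝ) + o + 1 ≤ x ∧ x ≤ 4 * (i : ℝ) + o + 3 := by
  set k := ⌊(x - 1) / 2⌋ with hk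
  have h1 : (k : ℝ) ≤ (x - 1) / 2 := Int.floor_le _
  have h2 : (x - 1) / 2 < k + 1 := Int.lt_floor_add_one _
  rcases Int.even_or_odd k with ⟨i, hi⟩ | ⟨i, hi⟩
  · refine ⟨0, Or.inl rfl, i, ?_, ?_⟩ <;> push_cast [hi] at h1 h2 ⊢ <;> linarith
  · refine ⟨2, Or.inr rfl, i, ?_, ?_⟩ <;> push_cast [hi] at h1 h2 ⊢ <;> linarith

noncomputable def off (x : ℝ) : ℝ := (line_off x).choose

lemma off_mem (x : ℝ) : off x = 0 ∨ off x = 2 := (line_off x).choose_spec.1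

lemma off_spec (x : ℝ) : ∃ i : ℤ, 4 * (i : ℝ) + off x + 1 ≤ x ∧ x ≤ 4 * (i : ℝ) + off x + 3 :=
  (line_off x).choose_spec.2

lemma coord_le (p c : EuclideanSpace ℝ (Fin 2)) (k : Fin 2) :
    dist (p k) (c k) ≤ dist p c := by
  rw [EuclideanSpace.dist_eq]
  have h : dist (p k) (c k) = Real.sqrt (dist (p k) (c k) ^ 2) :=
    (Real.sqrt_sq dist_nonneg).symm
  rw [h]
  apply Real.sqrt_le_sqrt
  exact Finset.single_le_sum (f := fun i => dist (p i) (c i) ^ 2) (fun i _ => sq_nonneg _) (Finset.mem_univ k)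

/-- For any finite set `S` of pairwise disjoint unit disks in the plane, at least
one of the four shifted grids has the property that the union of its cells contains at least
`|S|/4` disks from `S` (each disk entirely within a single cell). -/
theorem shifted_grid_contains_quarter (S : Finset (EuclideanSpace ℝ (Fin 2)))
    (hdisj : (S : Set (EuclideanSpace ℝ (Fin 2))).Pairwise fun c d =>
      Disjoint (Metric.closedBall c 1) (Metric.closedBall d 1)) :
    ∃ ox oy : ℝ, (ox = 0 ∨ ox = 2) ∧ (oy = 0 ∨ oy = 2) ∧
      ∃ S' ⊆ S, 4 * S'.card ≥ S.card ∧ ∀ c ∈ S', ∃ i j : ℤ,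
        Metric.closedBall c 1 ⊆
          {p : EuclideanSpace ℝ (Fin 2) |
            4 * (i : ℝ) + ox ≤ p 0 ∧ p 0 ≤ 4 * (i : ℝ) + ox + 4 ∧
            4 * (j : ℝ) + oy ≤ p 1 ∧ p 1 ≤ 4 * (j : ℝ) + oy + 4} := by
  classical
  set f : EuclideanSpace ℝ (Fin 2) → ℝ × ℝ := fun c => (off (c 0), off (c 1)) with hf
  set t : Finset (ℝ × ℝ) := {(0, 0), (0, 2), (2, 0), (2, 2)} with ht
  have hmaps : ∀ c ∈ S, f c ∈ t := by
    intro c _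
    rcases off_mem (c 0) with h0 | h0 <;> rcases off_mem (c 1) with h1 | h1 <;>
      simp [hf, ht, h0, h1, Prod.ext_iff]
  have hcard : ∑ b ∈ t, (S.filter fun c => f c = b).card = S.card :=
    (Finset.card_eq_sum_card_fiberwise hmaps).symm
  have htcard : t.card = 4 := by norm_num [ht, Prod.ext_iff]
  have : ∃ b ∈ t, S.card ≤ 4 * (S.filter fun c => f c = b).card := by
    by_contra hcon
    push_neg at hcon
    have : ∑ b ∈ t, 4 * (S.filter fun c => f c = b).card < ∑ b ∈ t, S.card := by
      apply Finset.sum_lt_sum_of_nonempty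
      · simp [ht]
      · intro b hb; exact hcon b hb
    rw [Finset.sum_const, htcard, ← Finset.mul_sum, hcard] at this
    simp only [smul_eq_mul] at this; omega
  obtain ⟨⟨ox, oy⟩, hbt, hle⟩ := this
  have hoxy : (ox = 0 ∨ ox = 2) ∧ (oy = 0 ∨ oy = 2) := by
    simp only [ht, Finset.mem_insert, Finset.mem_singleton, Prod.ext_iff] at hbt
    rcases hbt with ⟨h1, h2⟩ | ⟨h1, h2⟩ | ⟨h1, h2⟩ | ⟨h1, h2⟩ <;> simp [h1, h2]
  refine ⟨ox, oy, hoxy.1, hoxy.2, S.filter fun c => f c = (ox, oy),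
    Finset.filter_subset _ _, hle, ?_⟩
  intro c hc
  rw [Finset.mem_filter] at hc
  have hfc : off (c 0) = ox ∧ off (c 1) = oy := by
    have := hc.2; simpa [hf, Prod.ext_iff] using this
  obtain ⟨i, hi1, hi2⟩ := off_spec (c 0)
  obtain ⟨j, hj1, hj2⟩ := off_spec (c 1)
  rw [hfc.1] at hi1 hi2
  rw [hfc.2] at hj1 hj2
  refine ⟨i, j, ?_⟩
  intro p hp
  rw [Metric.mem_closedBall] at hp
  have h0 : dist (p 0) (c 0) ≤ 1 := (coord_le p c 0).trans hp
  have h1 : dist (p 1) (c 1) ≤ 1 := (coord_le p c 1).trans hp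
  rw [Real.dist_eq, abs_le] at h0 h1
  exact ⟨by linarith [h0.1], by linarith [h0.2], by linarith [h1.1], by linarith [h1.2]⟩
end

section
/- At most 3 pairwise disjoint unit disks can have their centers in a common half-open axis-aligned square [a, a+2) × [b, b+2). -/
/-- At most 3 pairwise disjoint unit disks can have their centers in a common
half-open axis-aligned square `[a, a+2) × [b, b+2)`. -/
theorem three_unit_disks_per_square (a b : ℝ) (S : Finset (EuclideanSpace ℝ (Fin 2)))
    (hin : ∀ c ∈ S, a ≤ c 0 ∧ c 0 < a + 2 ∧ b ≤ c 1 ∧ c 1 < b + 2)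
    (hdisj : (S : Set (EuclideanSpace ℝ (Fin 2))).Pairwise fun c d =>
      Disjoint (Metric.closedBall c 1) (Metric.closedBall d 1)) :
    S.card ≤ 3 := by
  by_contra hcard
  push_neg at hcard
  -- pairwise ℓ¹ inequality
  have hkey : ∀ c ∈ S, ∀ d ∈ S, c ≠ d → 2 < |c 0 - d 0| + |c 1 - d 1| := by
    intro c hc d hd hne
    have hdist : 2 < dist c d := by
      by_contra hle
      push_neg at hle
      have h1 : dist (midpoint ℝ c d) c ≤ 1 := by
        rw [dist_midpoint_left]; simp [Real.norm_two]; linarith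
      have h2 : dist (midpoint ℝ c d) d ≤ 1 := by
        rw [dist_midpoint_right]; simp [Real.norm_two]; linarith
      exact Set.disjoint_left.1 (hdisj hc hd hne)
        (Metric.mem_closedBall.2 h1) (Metric.mem_closedBall.2 h2)
    rw [EuclideanSpace.dist_eq, Fin.sum_univ_two] at hdist
    simp only [Real.dist_eq] at hdist
    have h4 : (4:ℝ) < |c 0 - d 0|^2 + |c 1 - d 1|^2 := by
      nlinarith [(Real.lt_sqrt (by norm_num : (0:ℝ) ≤ 2)).1 hdist]
    nlinarith [abs_nonneg (c 0 - d 0), abs_nonneg (c 1 - d 1),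
      mul_nonneg (abs_nonneg (c 0 - d 0)) (abs_nonneg (c 1 - d 1))]
  -- quadrant map
  classical
  set f : EuclideanSpace ℝ (Fin 2) → Bool × Bool :=
    fun c => (decide (c 0 < a + 1), decide (c 1 < b + 1)) with hf
  have hinj : Set.InjOn f S := by
    intro c hc d hd hfe
    by_contra hne
    have h2 := hkey c hc d hd hne
    have hx : decide (c 0 < a + 1) = decide (d 0 < a + 1) := congrArg Prod.fst hfe
    have hy : decide (c 1 < b + 1) = decide (d 1 < b + 1) := congrArg Prod.snd hfe
    rw [decide_eq_decide] at hx hy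
    obtain ⟨hc1, hc2, hc3, hc4⟩ := hin c hc
    obtain ⟨hd1, hd2, hd3, hd4⟩ := hin d hd
    have hxlt : |c 0 - d 0| < 1 := by
      rw [abs_lt]
      by_cases h : c 0 < a + 1
      · have := hx.1 h; constructor <;> linarith
      · have h' := hx.not.1 h; push_neg at h h'; constructor <;> linarith
    have hylt : |c 1 - d 1| < 1 := by
      rw [abs_lt]
      by_cases h : c 1 < b + 1
      · have := hy.1 h; constructor <;> linarith
      · have h' := hy.not.1 h; push_neg at h h'; constructor <;> linarith
    linarith
  have himg : (S.image f).card = S.card := Finset.card_image_of_injOn hinj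
  have huniv : S.image f = Finset.univ := by
    apply Finset.eq_univ_of_card
    have hle : (S.image f).card ≤ 4 := by
      have := Finset.card_le_univ (S.image f)
      simpa using this
    simp only [Fintype.card_prod, Fintype.card_bool]
    omega
  -- extract the four points
  have hmem : ∀ q : Bool × Bool, ∃ c ∈ S, f c = q := by
    intro q
    have : q ∈ S.image f := huniv ▸ Finset.mem_univ q
    simpa using this
  obtain ⟨P00, hP00S, hP00⟩ := hmem (true, true)
  obtain ⟨P10, hP10S, hP10⟩ := hmem (false, true)
  obtain ⟨P01, hP01S, hP01⟩ := hmem (true, false)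
  obtain ⟨P11, hP11S, hP11⟩ := hmem (false, false)
  -- decode quadrant info
  have e00 : P00 0 < a + 1 ∧ P00 1 < b + 1 := by
    constructor
    · exact of_decide_eq_true (congrArg Prod.fst hP00)
    · exact of_decide_eq_true (congrArg Prod.snd hP00)
  have e10 : a + 1 ≤ P10 0 ∧ P10 1 < b + 1 := by
    constructor
    · exact not_lt.1 (of_decide_eq_false (congrArg Prod.fst hP10))
    · exact of_decide_eq_true (congrArg Prod.snd hP10)
  have e01 : P01 0 < a + 1 ∧ b + 1 ≤ P01 1 := by
    constructor
    · exact of_decide_eq_true (congrArg Prod.fst hP01)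
    · exact not_lt.1 (of_decide_eq_false (congrArg Prod.snd hP01))
  have e11 : a + 1 ≤ P11 0 ∧ b + 1 ≤ P11 1 := by
    constructor
    · exact not_lt.1 (of_decide_eq_false (congrArg Prod.fst hP11))
    · exact not_lt.1 (of_decide_eq_false (congrArg Prod.snd hP11))
  obtain ⟨b001, b002, b003, b004⟩ := hin P00 hP00S
  obtain ⟨b101, b102, b103, b104⟩ := hin P10 hP10S
  obtain ⟨b011, b012, b013, b014⟩ := hin P01 hP01S
  obtain ⟨b111, b112, b113, b114⟩ := hin P11 hP11S
  -- distinctness via distinct f-values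
  have ne1 : P00 ≠ P10 := fun h => by rw [h, hP10] at hP00; simp at hP00
  have ne2 : P00 ≠ P01 := fun h => by rw [h, hP01] at hP00; simp at hP00
  have ne3 : P00 ≠ P11 := fun h => by rw [h, hP11] at hP00; simp at hP00
  have ne4 : P10 ≠ P01 := fun h => by rw [h, hP01] at hP10; simp at hP10
  have ne5 : P10 ≠ P11 := fun h => by rw [h, hP11] at hP10; simp at hP10
  have ne6 : P01 ≠ P11 := fun h => by rw [h, hP11] at hP01; simp at hP01
  have k1 := hkey P00 hP00S P10 hP10S ne1
  have k2 := hkey P00 hP00S P01 hP01S ne2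
  have k3 := hkey P00 hP00S P11 hP11S ne3
  have k4 := hkey P10 hP10S P01 hP01S ne4
  have k5 := hkey P10 hP10S P11 hP11S ne5
  have k6 := hkey P01 hP01S P11 hP11S ne6
  -- known-sign absolute values
  have a1 : |P00 0 - P10 0| = -(P00 0 - P10 0) := abs_of_nonpos (by linarith [e00.1, e10.1])
  have a2 : |P00 1 - P01 1| = -(P00 1 - P01 1) := abs_of_nonpos (by linarith [e00.2, e01.2])
  have a3 : |P00 0 - P11 0| = -(P00 0 - P11 0) := abs_of_nonpos (by linarith [e00.1, e11.1])
  have a4 : |P00 1 - P11 1| = -(P00 1 - P11 1) := abs_of_nonpos (by linarith [e00.2, e11.2])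
  have a5 : |P10 0 - P01 0| = P10 0 - P01 0 := abs_of_nonneg (by linarith [e10.1, e01.1])
  have a6 : |P10 1 - P01 1| = -(P10 1 - P01 1) := abs_of_nonpos (by linarith [e10.2, e01.2])
  have a7 : |P10 1 - P11 1| = -(P10 1 - P11 1) := abs_of_nonpos (by linarith [e10.2, e11.2])
  have a8 : |P01 0 - P11 0| = -(P01 0 - P11 0) := abs_of_nonpos (by linarith [e01.1, e11.1])
  rcases abs_cases (P00 1 - P10 1) with ⟨u1, _⟩ | ⟨u1, _⟩ <;>
    rcases abs_cases (P00 0 - P01 0) with ⟨u2, _⟩ | ⟨u2, _⟩ <;>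
      rcases abs_cases (P10 0 - P11 0) with ⟨u3, _⟩ | ⟨u3, _⟩ <;>
        rcases abs_cases (P01 1 - P11 1) with ⟨u4, _⟩ | ⟨u4, _⟩ <;>
          linarith [k1, k2, k3, k4, k5, k6, a1, a2, a3, a4, a5, a6, a7, a8, u1, u2, u3, u4,
            e00.1, e00.2, e10.1, e10.2, e01.1, e01.2, e11.1, e11.2]
end

section
/- A closed disk d of radius r in the plane can intersect at most 5 pairwise disjoint closed disks, each of radius at least r. -/
/-!
Let `c` be the center of the small disk. The center of a disk of radius `ρ ≥ r` meeting it lies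
within `ρ + r` of `c`, while centers of disjoint disks of radii `ρ, σ` are more than `ρ + σ`
apart. Among six directions seen from `c` two make an angle of at most `π / 3`, and for such
vectors `x, y` the law of cosines gives `‖x - y‖ ≤ max ‖x‖ ‖y‖`. For the corresponding disks
this reads `ρ + σ < ‖x - y‖ ≤ max (ρ + r) (σ + r) ≤ ρ + σ`, a contradiction.
-/

open Real Finset InnerProductGeometry Metric

theorem Finset.exists_abs_sub_lt_of_forall_mem_Ico {ι : Type*} {s : Finset ι} {m : ℕ}
    (hm : m < #s) {L : ℝ} (hL : 0 < L) (a : ι → ℝ)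
    (ha : ∀ i ∈ s, a i ∈ Set.Ico 0 (m * L)) :
    ∃ i ∈ s, ∃ j ∈ s, i ≠ j ∧ |a i - a j| < L := by
  have hmaps : Set.MapsTo (fun i => ⌊a i / L⌋₊) s (range m) := by
    intro i hi
    rw [coe_range, Set.mem_Iio, Nat.floor_lt (div_nonneg (ha i hi).1 hL.le), div_lt_iff₀ hL]
    exact (ha i hi).2
  obtain ⟨i, hi, j, hj, hij, hfloor⟩ :=
    exists_ne_map_eq_of_card_lt_of_maps_to (by rwa [card_range]) hmaps
  refine ⟨i, hi, j, hj, hij, ?_⟩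
  have hfloor' : ⌊a i / L⌋ = ⌊a j / L⌋ := by
    rw [← Int.natCast_floor_eq_floor (div_nonneg (ha i hi).1 hL.le),
      ← Int.natCast_floor_eq_floor (div_nonneg (ha j hj).1 hL.le)]
    exact congrArg _ hfloor
  have h := Int.abs_sub_lt_one_of_floor_eq_floor hfloor'
  rwa [← sub_div, abs_div, abs_of_pos hL, div_lt_one hL] at h

namespace Real.Angle

theorem abs_toReal_coe_le (x : ℝ) : |(x : Angle).toReal| ≤ |x| := by
  rcases lt_or_ge π |x| with h | h
  · exact (abs_toReal_le_pi _).trans h.le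
  rcases eq_or_ne x (-π) with rfl | hx
  · simp
  · rw [toReal_coe_eq_self_iff.2 ⟨(neg_le_of_abs_le h).lt_of_ne hx.symm, le_of_abs_le h⟩]

theorem exists_abs_toReal_sub_le {ι : Type*} (s : Finset ι) (θ : ι → Angle) (hs : 2 ≤ #s) :
    ∃ i ∈ s, ∃ j ∈ s, i ≠ j ∧ |(θ i - θ j).toReal| ≤ 2 * π / #s := by
  obtain ⟨i₀, hi₀, hmin⟩ := s.exists_min_image (fun i => (θ i).toReal) (card_pos.1 (by omega))
  set a : ι → ℝ := fun i => (θ i).toReal - (θ i₀).toReal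
  have hsub (i j : ι) : θ i - θ j = ↑(a i - a j) := by simp [a, coe_toReal]
  have ha (i : ι) (hi : i ∈ s) : 0 ≤ a i ∧ a i < 2 * π := by
    have := neg_pi_lt_toReal (θ i₀)
    have := toReal_le_pi (θ i)
    exact ⟨sub_nonneg.2 (hmin i hi), by linarith⟩
  have hn : (2 : ℝ) ≤ #s := by exact_mod_cast hs
  set L := 2 * π / #s
  have hL : 0 < L := by positivity
  have hLs : L * #s = 2 * π := div_mul_cancel₀ _ (by positivity)
  -- Either some point lies within `L` of `θ i₀` across the cut at `θ i₀ + 2π`, or all the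
  -- representatives `a i` fit into `#s - 1` intervals of length `L`.
  by_cases hlast : ∃ j ∈ s, 2 * π - L ≤ a j
  · obtain ⟨j, hj, hjL⟩ := hlast
    have hai₀ : a i₀ = 0 := sub_self _
    refine ⟨j, hj, i₀, hi₀, ?_, ?_⟩
    · rintro rfl
      nlinarith [pi_pos]
    · have := ha j hj
      rw [hsub, ← sub_zero ((a j - a i₀ : ℝ) : Angle), ← coe_two_pi, ← coe_sub]
      refine (abs_toReal_coe_le _).trans ?_
      rw [abs_le]
      constructor <;> linarith
  · push Not at hlast
    obtain ⟨i, hi, j, hj, hij, hlt⟩ :=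
      exists_abs_sub_lt_of_forall_mem_Ico (s := s) (m := #s - 1) (by omega) hL a fun i hi => by
        refine ⟨(ha i hi).1, ?_⟩
        push_cast [Nat.cast_sub (by omega : 1 ≤ #s)]
        linarith [hlast i hi]
    refine ⟨i, hi, j, hj, hij, ?_⟩
    rw [hsub]
    exact (abs_toReal_coe_le _).trans hlt.le

end Real.Angle

theorem norm_sub_le_max_of_angle_le_pi_div_three {V : Type*} [NormedAddCommGroup V]
    [InnerProductSpace ℝ V] {x y : V} (h : angle x y ≤ π / 3) :
    ‖x - y‖ ≤ max ‖x‖ ‖y‖ := by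
  have hcos : 1 / 2 ≤ cos (angle x y) := by
    rw [← cos_pi_div_three]
    exact cos_le_cos_of_nonneg_of_le_pi (angle_nonneg x y) (by linarith [pi_pos]) h
  have hsq : ‖x - y‖ ^ 2 ≤ ‖x‖ ^ 2 + ‖y‖ ^ 2 - ‖x‖ * ‖y‖ := by
    have := norm_sub_sq_eq_norm_sq_add_norm_sq_sub_two_mul_norm_mul_norm_mul_cos_angle x y
    nlinarith [mul_nonneg (norm_nonneg x) (norm_nonneg y)]
  have hmax : ‖x‖ ^ 2 + ‖y‖ ^ 2 - ‖x‖ * ‖y‖ ≤ max ‖x‖ ‖y‖ ^ 2 := by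
    rcases le_total ‖x‖ ‖y‖ with hxy | hxy
    · rw [max_eq_right hxy]
      nlinarith [norm_nonneg x]
    · rw [max_eq_left hxy]
      nlinarith [norm_nonneg y]
  exact (sq_le_sq₀ (norm_nonneg _) (by positivity)).1 (hsq.trans hmax)

theorem Complex.exists_norm_sub_le_max_norm {ι : Type*} (s : Finset ι) (z : ι → ℂ)
    (hs : 5 < #s) : ∃ i ∈ s, ∃ j ∈ s, i ≠ j ∧ ‖z i - z j‖ ≤ max ‖z i‖ ‖z j‖ := by
  by_cases hzero : ∃ i ∈ s, z i = 0
  · obtain ⟨i, hi, hzi⟩ := hzero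
    obtain ⟨j, hj, hji⟩ := s.exists_mem_ne (by omega) i
    exact ⟨i, hi, j, hj, hji.symm, by simp [hzi]⟩
  push Not at hzero
  obtain ⟨i, hi, j, hj, hij, harg⟩ :=
    Real.Angle.exists_abs_toReal_sub_le s (fun i => (z i).arg) (by omega)
  refine ⟨i, hi, j, hj, hij, norm_sub_le_max_of_angle_le_pi_div_three ?_⟩
  rw [angle_eq_abs_arg (hzero i hi) (hzero j hj), ← arg_coe_angle_toReal_eq_arg,
    arg_div_coe_angle (hzero i hi) (hzero j hj)]
  refine harg.trans ?_
  have : (6 : ℝ) ≤ #s := by exact_mod_cast hs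
  rw [div_le_div_iff₀ (by positivity) (by norm_num)]
  nlinarith [pi_pos]

theorem Isometry.exists_dist_le_max_dist {P ι : Type*} [PseudoMetricSpace P] {f : P → ℂ}
    (hf : Isometry f) (c : P) (s : Finset ι) (p : ι → P) (hs : 5 < #s) :
    ∃ i ∈ s, ∃ j ∈ s, i ≠ j ∧ dist (p i) (p j) ≤ max (dist (p i) c) (dist (p j) c) := by
  obtain ⟨i, hi, j, hj, hij, h⟩ :=
    Complex.exists_norm_sub_le_max_norm s (fun i => f (p i) - f c) hs
  refine ⟨i, hi, j, hj, hij, ?_⟩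
  simpa only [sub_sub_sub_cancel_right, ← dist_eq_norm, hf.dist_eq] using h

theorem max_dist_lt_dist_of_disjoint_closedBall {E : Type*} [SeminormedAddCommGroup E]
    [NormedSpace ℝ E] {x y c : E} {δ ε r : ℝ} (hx : (closedBall x δ ∩ closedBall c r).Nonempty)
    (hy : (closedBall y ε ∩ closedBall c r).Nonempty) (hδ : r ≤ δ) (hε : r ≤ ε)
    (h : Disjoint (closedBall x δ) (closedBall y ε)) :
    max (dist x c) (dist y c) < dist x y := by
  have hsep := (disjoint_closedBall_closedBall_iff (nonempty_closedBall.1 hx.left)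
    (nonempty_closedBall.1 hy.left)).1 h
  have hxc := dist_le_add_of_nonempty_closedBall_inter_closedBall hx
  have hyc := dist_le_add_of_nonempty_closedBall_inter_closedBall hy
  exact max_lt (by linarith) (by linarith)

theorem disk_meets_at_most_five_general (c : EuclideanSpace ℝ (Fin 2)) (r : ℝ)
    (S : Finset (EuclideanSpace ℝ (Fin 2) × ℝ))
    (hrad : ∀ d ∈ S, r ≤ d.2)
    (hdisj : (S : Set (EuclideanSpace ℝ (Fin 2) × ℝ)).Pairwise fun d e =>
      Disjoint (Metric.closedBall d.1 d.2) (Metric.closedBall e.1 e.2))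
    (hint : ∀ d ∈ S, (Metric.closedBall d.1 d.2 ∩ Metric.closedBall c r).Nonempty) :
    S.card ≤ 5 := by
  by_contra! hS
  obtain ⟨d, hd, e, he, hde, hle⟩ :=
    Complex.orthonormalBasisOneI.repr.symm.isometry.exists_dist_le_max_dist c S Prod.fst hS
  exact hle.not_gt <| max_dist_lt_dist_of_disjoint_closedBall (hint d hd) (hint e he)
    (hrad d hd) (hrad e he) (hdisj hd he hde)

/-- A closed disk of radius `r` in the plane can intersect at most 5 pairwise
disjoint closed disks, each of radius at least `r`. -/
theorem disk_meets_at_most_five (c : EuclideanSpace ℝ (Fin 2)) (r : ℝ) (hr : 0 ≤ r)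
    (S : Finset (EuclideanSpace ℝ (Fin 2) × ℝ))
    (hrad : ∀ d ∈ S, r ≤ d.2)
    (hdisj : (S : Set (EuclideanSpace ℝ (Fin 2) × ℝ)).Pairwise fun d e =>
      Disjoint (Metric.closedBall d.1 d.2) (Metric.closedBall e.1 e.2))
    (hint : ∀ d ∈ S, (Metric.closedBall d.1 d.2 ∩ Metric.closedBall c r).Nonempty) :
    S.card ≤ 5 :=
  disk_meets_at_most_five_general c r S hrad hdisj hint
end

section
/- Let c be a square cell of side length 3^i and let o(c) = 3d' be the disk of radius 3·3^i/√2 = 3^{i+1}/√2 concentric with the circumscribed disk d' of c. Then any family of pairwise disjoint closed disks, each of radius at least 3^{i+1}/4, that all intersect o(c), has cardinality at most (2+2√2)², hence at most 23; in particular O(1). -/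
open Metric MeasureTheory ENNReal

lemma shrink_ball {E : Type*} [NormedAddCommGroup E] [NormedSpace ℝ E]
    (x c : E) (r ρ : ℝ) (hr : 0 < r) (hrρ : r ≤ ρ) (hx : dist x c ≤ ρ) :
    ∃ z : E, closedBall z r ⊆ closedBall c ρ ∧ dist z x ≤ r := by
  by_cases hD : dist x c ≤ r
  · exact ⟨c, closedBall_subset_closedBall hrρ, by rwa [dist_comm] at hD⟩
  push_neg at hD
  set D := dist x c with hDdef
  have hD0 : 0 < D := hr.trans hD
  refine ⟨x + (r / D) • (c - x), ?_, ?_⟩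
  · apply closedBall_subset_closedBall'
    have hzc : dist (x + (r / D) • (c - x)) c = D - r := by
      have : x + (r / D) • (c - x) - c = (1 - r / D) • (x - c) := by
        rw [sub_smul, one_smul, smul_sub]
        module
      rw [dist_eq_norm, this, norm_smul, Real.norm_eq_abs,
        abs_of_nonneg (by rw [sub_nonneg]; exact div_le_one_of_le₀ hD.le hD0.le),
        ← dist_eq_norm, ← hDdef]
      field_simp
    rw [hzc]; linarith
  · have : x + (r / D) • (c - x) - x = (r / D) • (c - x) := by abel
    rw [dist_eq_norm, this, norm_smul, Real.norm_eq_abs,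
      abs_of_nonneg (by positivity), ← dist_eq_norm, dist_comm c x, ← hDdef]
    rw [div_mul_cancel₀ r hD0.ne']

/-- Any family of pairwise disjoint closed disks, each of radius at least
`3^(i+1)/4`, that all intersect the obstacle disk `o(c)` of radius `3^(i+1)/√2` concentric
with a square cell of side `3^i`, has cardinality at most 23. -/
theorem big_obstacle_disk_packing (i : ℤ) (p : EuclideanSpace ℝ (Fin 2))
    (A : Finset (EuclideanSpace ℝ (Fin 2) × ℝ))
    (hrad : ∀ d ∈ A, (3 : ℝ) ^ (i + 1) / 4 ≤ d.2)
    (hdisj : (A : Set (EuclideanSpace ℝ (Fin 2) × ℝ)).Pairwise fun d e =>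
      Disjoint (Metric.closedBall d.1 d.2) (Metric.closedBall e.1 e.2))
    (hint : ∀ d ∈ A,
      (Metric.closedBall d.1 d.2 ∩
        Metric.closedBall p ((3 : ℝ) ^ (i + 1) / Real.sqrt 2)).Nonempty) :
    A.card ≤ 23 := by
  classical
  set s : ℝ := (3 : ℝ) ^ (i + 1) with hs
  have hs0 : 0 < s := zpow_pos (by norm_num) _
  set r : ℝ := s / 4 with hrdef
  have hr0 : 0 < r := by positivity
  set R : ℝ := s / Real.sqrt 2 with hRdef
  have hsqrt2 : Real.sqrt 2 ^ 2 = 2 := Real.sq_sqrt (by norm_num)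
  have hsqrt2_pos : 0 < Real.sqrt 2 := Real.sqrt_pos.2 (by norm_num)
  -- pick shrunken disks
  have key : ∀ d : EuclideanSpace ℝ (Fin 2) × ℝ, ∃ z : EuclideanSpace ℝ (Fin 2),
      d ∈ A → closedBall z r ⊆ closedBall d.1 d.2 ∧
        closedBall z r ⊆ closedBall p (R + 2 * r) := by
    intro d
    by_cases hd : d ∈ A
    · obtain ⟨x, hx1, hx2⟩ := hint d hd
      obtain ⟨z, hz1, hz2⟩ := shrink_ball x d.1 r d.2 hr0 (hrad d hd)
        (mem_closedBall.1 hx1)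
      refine ⟨z, fun _ => ⟨hz1, ?_⟩⟩
      apply closedBall_subset_closedBall'
      have : dist z p ≤ r + R :=
        (dist_triangle z x p).trans (add_le_add hz2 (mem_closedBall.1 hx2))
      linarith
    · exact ⟨0, fun h => absurd h hd⟩
  choose z hz using key
  -- the small balls are pairwise disjoint
  have hpd : (A : Set (EuclideanSpace ℝ (Fin 2) × ℝ)).PairwiseDisjoint
      fun d => closedBall (z d) r := by
    intro d hd e he hde
    exact Set.disjoint_of_subset ((hz d hd).1) ((hz e he).1) (hdisj hd he hde)
  -- measure argument
  have hunion : (⋃ d ∈ A, closedBall (z d) r) ⊆ closedBall p (R + 2 * r) := by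
    simp only [Set.iUnion_subset_iff]
    exact fun d hd => (hz d hd).2
  have hmeas := measure_biUnion_finset hpd
    (fun d _ => (measurableSet_closedBall : MeasurableSet (closedBall (z d) r)))
    (μ := volume)
  have hle : ∑ d ∈ A, volume (closedBall (z d) r) ≤ volume (closedBall p (R + 2 * r)) := by
    rw [← hmeas]; exact measure_mono hunion
  have hRr : 0 < R + 2 * r := by positivity
  have hvol : ∀ x : EuclideanSpace ℝ (Fin 2), ∀ ρ : ℝ, 0 ≤ ρ →
      volume (closedBall x ρ) = ENNReal.ofReal (ρ ^ 2) * volume (ball (0 : EuclideanSpace ℝ (Fin 2)) 1) := by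
    intro x ρ hρ
    rw [Measure.addHaar_closedBall volume x hρ]
    norm_num [finrank_euclideanSpace]
  rw [Finset.sum_congr rfl (fun d _ => hvol (z d) r hr0.le), Finset.sum_const,
    hvol p _ hRr.le] at hle
  -- cancel the volume of the unit ball
  have hV0 : volume (ball (0 : EuclideanSpace ℝ (Fin 2)) 1) ≠ 0 :=
    (measure_ball_pos volume 0 one_pos).ne'
  have hVtop : volume (ball (0 : EuclideanSpace ℝ (Fin 2)) 1) ≠ ⊤ :=
    measure_ball_lt_top.ne
  rw [nsmul_eq_mul, ← mul_assoc] at hle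
  have hle2 : (A.card : ℝ≥0∞) * ENNReal.ofReal (r ^ 2) ≤ ENNReal.ofReal ((R + 2 * r) ^ 2) :=
    (ENNReal.mul_le_mul_iff_left hV0 hVtop).1 hle
  -- numeric: (R + 2r)^2 ≤ 23.5 r^2
  have hsqrt2_le : Real.sqrt 2 ≤ 1.4375 := by nlinarith [hsqrt2, hsqrt2_pos]
  have hnum : (R + 2 * r) ^ 2 ≤ 23.5 * r ^ 2 := by
    have hR : R = Real.sqrt 2 / 2 * s := by
      rw [hRdef, div_eq_iff hsqrt2_pos.ne', mul_comm]
      nlinarith [hsqrt2]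
    rw [hR, hrdef]
    nlinarith [hsqrt2, hsqrt2_pos, hs0, mul_pos hsqrt2_pos hs0]
  have hle3 : (A.card : ℝ≥0∞) * ENNReal.ofReal (r ^ 2) ≤
      ENNReal.ofReal 23.5 * ENNReal.ofReal (r ^ 2) := by
    calc (A.card : ℝ≥0∞) * ENNReal.ofReal (r ^ 2) ≤ ENNReal.ofReal ((R + 2 * r) ^ 2) := hle2
    _ ≤ ENNReal.ofReal (23.5 * r ^ 2) := ENNReal.ofReal_le_ofReal hnum
    _ = ENNReal.ofReal 23.5 * ENNReal.ofReal (r ^ 2) :=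
        ENNReal.ofReal_mul (by norm_num)
  have hr2 : ENNReal.ofReal (r ^ 2) ≠ 0 := by
    simp [ENNReal.ofReal_eq_zero, not_le]; positivity
  have hfin : (A.card : ℝ≥0∞) ≤ ENNReal.ofReal 23.5 :=
    (ENNReal.mul_le_mul_iff_left hr2 ENNReal.ofReal_ne_top).1 hle3
  have : (A.card : ℝ) ≤ 23.5 := by
    have := ENNReal.toReal_mono ENNReal.ofReal_ne_top hfin
    rwa [ENNReal.toReal_natCast, ENNReal.toReal_ofReal (by norm_num)] at this
  have h24 : (A.card : ℝ) < 24 := this.trans_lt (by norm_num)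
  exact Nat.lt_succ_iff.1 (by exact_mod_cast h24)
end
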